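/- (Lemma 1) Let a < b be real numbers, 0 < α < 1, 0 < β < 1, γ ∈ ℂ, and let f, g : [a,b] → ℝ be continuously differentiable with f(a) = f(b) = 0 or g(a) = g(b) = 0. Assume that D_{a+}^α f, D_{b-}^β f, D_{a+}^β g, and D_{b-}^α g exist and are integrable on [a,b]. Then ∫_a^b (D_γ^{α,β} f)(t) g(t) dt = − ∫_a^b f(t) (D_{−γ}^{β,α} g)(t) dt. -/

import Mathlib

open MeasureTheory Real Set

/-- The function whose derivative gives the left Riemann–Liouville fractional derivative
of order `α ∈ (0,1)`: `t ↦ (1/Γ(1-α)) ∫_a^t f(τ)(t-τ)^{-α} dτ`. -/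
noncomputable def leftKer (a α : ℝ) (f : ℝ → ℝ) (t : ℝ) : ℝ :=
  (1 / Real.Gamma (1 - α)) * ∫ τ in a..t, f τ * (t - τ) ^ (-α)

/-- Left Riemann–Liouville fractional derivative of order `α ∈ (0,1)`. -/
noncomputable def leftRLD (a α : ℝ) (f : ℝ → ℝ) (t : ℝ) : ℝ :=
  deriv (leftKer a α f) t

/-- The function whose (negated) derivative gives the right Riemann–Liouville fractional
derivative of order `β ∈ (0,1)`. -/
noncomputable def rightKer (b β : ℝ) (f : ℝ → ℝ) (s : ℝ) : ℝ :=
  (1 / Real.Gamma (1 - β)) * ∫ τ in s..b, f τ * (τ - s) ^ (-β)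

/-- Right Riemann–Liouville fractional derivative of order `β ∈ (0,1)`. -/
noncomputable def rightRLD (b β : ℝ) (f : ℝ → ℝ) (s : ℝ) : ℝ :=
  - deriv (rightKer b β f) s

open Topology Filter Function

lemma substL (a α : ℝ) (f : ℝ → ℝ) (t : ℝ) :
    (∫ τ in a..t, f τ * (t - τ) ^ (-α)) = ∫ u in (0:ℝ)..(t-a), f (t-u) * u ^ (-α) := by
  have h := intervalIntegral.integral_comp_sub_left (a := a) (b := t)
    (fun u => f (t-u) * u ^ (-α)) t
  simp only [sub_sub_cancel, sub_self] at h
  exact h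

lemma substR (b α : ℝ) (g : ℝ → ℝ) (s : ℝ) :
    (∫ τ in s..b, g τ * (τ - s) ^ (-α)) = ∫ u in (0:ℝ)..(b-s), g (s+u) * u ^ (-α) := by
  have h := intervalIntegral.integral_comp_add_right (a := (0:ℝ)) (b := b - s)
    (fun τ => g τ * (τ - s) ^ (-α)) s
  simp only [zero_add, sub_add_cancel, add_sub_cancel_right] at h
  rw [← h]
  congr 1; ext u; rw [add_comm]

lemma rightKer_reflect (a b α : ℝ) (g : ℝ → ℝ) (s : ℝ) :
    rightKer b α g s = leftKer a α (fun v => g (a+b-v)) (a+b-s) := by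
  unfold rightKer leftKer
  congr 1
  have h := intervalIntegral.integral_comp_sub_left (a := a) (b := a+b-s)
    (fun τ => g τ * (τ - s) ^ (-α)) (a+b)
  simp only [show a+b-(a+b-s) = s by ring, show a+b-a = b by ring] at h
  rw [← h]
  congr 1; ext v; congr 2; ring

lemma leftKer_a (a α : ℝ) (f : ℝ → ℝ) : leftKer a α f a = 0 := by
  simp [leftKer]

lemma rightKer_b (b α : ℝ) (g : ℝ → ℝ) : rightKer b α g b = 0 := by
  simp [rightKer]

lemma ae_ne_real (c : ℝ) : ∀ᵐ u : ℝ, u ≠ c := by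
  refine MeasureTheory.ae_iff.2 ?_
  simpa [Set.setOf_eq_eq_singleton, not_not] using (Real.volume_singleton (a := c))

lemma contOn_leftKer (a b α : ℝ) (hab : a < b) (hα : 0 < α) (hα1 : α < 1)
    (f : ℝ → ℝ) (hf : ContinuousOn f (Icc a b)) :
    ContinuousOn (leftKer a α f) (Icc a b) := by
  obtain ⟨C, hC⟩ := (isCompact_Icc (a := a) (b := b)).exists_bound_of_continuousOn hf
  set M := max C 0 with hM
  have hM0 : (0:ℝ) ≤ M := le_max_right _ _
  have hCM : ∀ x ∈ Icc a b, |f x| ≤ M := fun x hx => le_trans (hC x hx) (le_max_left _ _)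
  set F : ℝ → ℝ → ℝ := fun t u => (Ioc 0 (t-a)).indicator (fun u => f (t-u) * u ^ (-α)) u
    with hFdef
  have huIoc : Set.uIoc (0:ℝ) (b-a) = Ioc 0 (b-a) := Set.uIoc_of_le (by linarith)
  have key : ContinuousOn (fun t => ∫ u in (0:ℝ)..(b-a), F t u) (Icc a b) := by
    intro t₀ ht₀
    apply intervalIntegral.continuousWithinAt_of_dominated_interval
      (bound := fun u => M * u ^ (-α))
    · filter_upwards [self_mem_nhdsWithin] with t ht
      have hcont : ContinuousOn (fun u => f (t-u) * u ^ (-α)) (Ioc 0 (t-a)) := by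
        apply ContinuousOn.mul
        · refine ContinuousOn.comp (g := f) hf
            ((continuous_const.sub continuous_id).continuousOn) ?_
          intro u hu
          exact mem_Icc.2 ⟨by linarith [hu.2], by linarith [hu.1, ht.2]⟩
        · intro u hu
          exact (Real.continuousAt_rpow_const u (-α) (Or.inl (ne_of_gt hu.1))).continuousWithinAt
      exact ((aestronglyMeasurable_indicator_iff measurableSet_Ioc).2
        (hcont.aestronglyMeasurable measurableSet_Ioc)).restrict
    · filter_upwards [self_mem_nhdsWithin] with t ht
      refine Filter.Eventually.of_forall (fun u hu => ?_)
      rw [huIoc] at hu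
      by_cases h : u ∈ Ioc 0 (t-a)
      · rw [hFdef]
        simp only [indicator_of_mem h]
        rw [Real.norm_eq_abs, abs_mul, abs_of_nonneg (Real.rpow_nonneg h.1.le _)]
        refine mul_le_mul_of_nonneg_right (hCM _ ⟨by linarith [h.2], ?_⟩)
          (Real.rpow_nonneg h.1.le _)
        have := ht.2; have := h.1; linarith
      · rw [hFdef]
        simp only [indicator_of_notMem h, norm_zero]
        exact mul_nonneg hM0 (Real.rpow_nonneg hu.1.le _)
    · exact (intervalIntegral.intervalIntegrable_rpow' (by linarith)).const_mul M
    · filter_upwards [ae_ne_real (t₀ - a)] with u hu hmem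
      rw [huIoc] at hmem
      rcases lt_or_gt_of_ne hu with h1 | h2
      · -- u < t₀ - a
        have ht0u : t₀ - u ∈ Ioo a b := ⟨by linarith, by have := ht₀.2; have := hmem.1; linarith⟩
        have hct : ContinuousAt (fun t => f (t-u) * u ^ (-α)) t₀ := by
          refine ContinuousAt.mul ?_ continuousAt_const
          have hsub : ContinuousAt (fun t : ℝ => t - u) t₀ :=
            (continuous_id.sub continuous_const).continuousAt
          exact ContinuousAt.comp (x := t₀) (f := fun t : ℝ => t - u) (g := f)
            (hf.continuousAt (Icc_mem_nhds ht0u.1 ht0u.2)) hsub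
        have hopen : IsOpen {t : ℝ | u < t - a} := isOpen_lt continuous_const
          (continuous_id.sub continuous_const)
        have hev : (fun t => F t u) =ᶠ[𝓝 t₀] (fun t => f (t-u) * u ^ (-α)) := by
          filter_upwards [hopen.mem_nhds (show u < t₀ - a from h1)] with t ht
          have humem : u ∈ Ioc 0 (t - a) := ⟨hmem.1, le_of_lt ht⟩
          simp only [hFdef]
          exact Set.indicator_of_mem humem _
        exact (hct.congr hev.symm).continuousWithinAt
      · -- u > t₀ - a
        have hopen : IsOpen {t : ℝ | t - a < u} := isOpen_lt
          (continuous_id.sub continuous_const) continuous_const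
        have hev : (fun t => F t u) =ᶠ[𝓝 t₀] (fun _ => (0:ℝ)) := by
          filter_upwards [hopen.mem_nhds (show t₀ - a < u from h2)] with t ht
          simp only [hFdef]
          exact Set.indicator_of_notMem (fun hmem' => absurd hmem'.2 (not_le.2 ht)) _
        exact (continuousAt_const.congr hev.symm).continuousWithinAt
  have heq : EqOn (leftKer a α f)
      (fun t => (1/Real.Gamma (1-α)) * ∫ u in (0:ℝ)..(b-a), F t u) (Icc a b) := by
    intro t ht
    show leftKer a α f t = _
    unfold leftKer
    congr 1
    rw [substL]
    have h1 : (0:ℝ) ≤ t - a := by linarith [ht.1]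
    rw [intervalIntegral.integral_of_le (by linarith [ht.2] : (0:ℝ) ≤ b - a),
        intervalIntegral.integral_of_le h1]
    rw [hFdef]
    have hmin : (b - a) ⊓ (t - a) = t - a := inf_eq_right.2 (by linarith [ht.2])
    rw [MeasureTheory.setIntegral_indicator measurableSet_Ioc, Set.Ioc_inter_Ioc, hmin]
    norm_num
  exact (continuousOn_const.mul key).congr heq

lemma contOn_rightKer (a b α : ℝ) (hab : a < b) (hα : 0 < α) (hα1 : α < 1)
    (g : ℝ → ℝ) (hg : ContinuousOn g (Icc a b)) :
    ContinuousOn (rightKer b α g) (Icc a b) := by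
  have hmaps : ∀ v ∈ Icc a b, a + b - v ∈ Icc a b := fun v hv =>
    mem_Icc.2 ⟨by linarith [hv.2], by linarith [hv.1]⟩
  have hrefl : ContinuousOn (fun v => g (a+b-v)) (Icc a b) :=
    ContinuousOn.comp (g := g) hg ((continuous_const.sub continuous_id).continuousOn) hmaps
  have hL := contOn_leftKer a b α hab hα hα1 _ hrefl
  have heq : rightKer b α g = fun s => leftKer a α (fun v => g (a+b-v)) (a+b-s) :=
    funext (rightKer_reflect a b α g)
  rw [heq]
  exact ContinuousOn.comp (g := leftKer a α fun v => g (a+b-v)) hL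
    ((continuous_const.sub continuous_id).continuousOn) hmaps

open Function in
lemma fubiniL (a b α : ℝ) (hab : a < b) (hα : 0 < α) (hα1 : α < 1)
    (F G : ℝ → ℝ) (hF : ContinuousOn F (Icc a b)) (hG : ContinuousOn G (Icc a b)) :
    (∫ t in a..b, (∫ u in (0:ℝ)..(t-a), F (t-u) * u ^ (-α)) * G t)
      = (∫ u in (0:ℝ)..(b-a), (∫ s in a..(b-u), F s * G (s+u)) * u ^ (-α))
    ∧ IntervalIntegrable (fun u => (∫ s in a..(b-u), F s * G (s+u)) * u ^ (-α))
        volume (0:ℝ) (b-a) := by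
  obtain ⟨CF, hCF⟩ := (isCompact_Icc (a := a) (b := b)).exists_bound_of_continuousOn hF
  obtain ⟨CG, hCG⟩ := (isCompact_Icc (a := a) (b := b)).exists_bound_of_continuousOn hG
  set MF := max CF 0 with hMF; set MG := max CG 0 with hMG
  have hMF0 : (0:ℝ) ≤ MF := le_max_right _ _
  have hMG0 : (0:ℝ) ≤ MG := le_max_right _ _
  have hFb : ∀ x ∈ Icc a b, |F x| ≤ MF := fun x hx => le_trans (hCF x hx) (le_max_left _ _)
  have hGb : ∀ x ∈ Icc a b, |G x| ≤ MG := fun x hx => le_trans (hCG x hx) (le_max_left _ _)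
  set T : Set (ℝ × ℝ) := {q : ℝ × ℝ | a < q.1 ∧ q.1 ≤ b ∧ 0 < q.2 ∧ q.2 ≤ q.1 - a} with hTdef
  have hT : MeasurableSet T := by
    simp only [hTdef, Set.setOf_and]
    exact ((measurableSet_lt measurable_const measurable_fst).inter
      ((measurableSet_le measurable_fst measurable_const).inter
      ((measurableSet_lt measurable_const measurable_snd).inter
      (measurableSet_le measurable_snd (measurable_fst.sub measurable_const)))))
  set h : ℝ × ℝ → ℝ := fun q => F (q.1 - q.2) * G q.1 * q.2 ^ (-α) with hhdef
  set φ : ℝ → ℝ → ℝ := fun t u => T.indicator h (t, u) with hφdef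
  have huncurry : uncurry φ = T.indicator h := rfl
  have hTsub : ∀ q ∈ T, (q.1 - q.2 ∈ Icc a b ∧ q.1 ∈ Icc a b ∧ 0 < q.2 ∧ q.2 ≤ b - a) := by
    rintro q ⟨h1, h2, h3, h4⟩
    exact ⟨mem_Icc.2 ⟨by linarith, by linarith⟩, mem_Icc.2 ⟨h1.le, h2⟩, h3, by linarith⟩
  have hker : ContinuousOn h T := by
    apply ContinuousOn.mul
    · apply ContinuousOn.mul
      · refine ContinuousOn.comp (g := F) hF
          ((continuous_fst.sub continuous_snd).continuousOn) ?_
        exact fun q hq => (hTsub q hq).1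
      · refine ContinuousOn.comp (g := G) hG (continuous_fst.continuousOn) ?_
        exact fun q hq => (hTsub q hq).2.1
    · intro q hq
      exact ((Real.continuousAt_rpow_const q.2 (-α)
        (Or.inl (ne_of_gt (hTsub q hq).2.2.1))).comp
        continuous_snd.continuousAt).continuousWithinAt
  have hmeas : AEStronglyMeasurable (uncurry φ) ((volume : Measure ℝ).prod volume) := by
    rw [huncurry]
    exact (aestronglyMeasurable_indicator_iff hT).2 (hker.aestronglyMeasurable hT)
  set bnd : ℝ × ℝ → ℝ := fun q =>
    ((Ioc a b).indicator (fun _ => (1:ℝ)) q.1) *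
    ((Ioc 0 (b-a)).indicator (fun u => MF * MG * u ^ (-α)) q.2) with hbnddef
  have hbnd_int : Integrable bnd ((volume : Measure ℝ).prod volume) := by
    apply Integrable.mul_prod
    · exact (integrable_indicator_iff measurableSet_Ioc).2
        (integrableOn_const measure_Ioc_lt_top.ne)
    · refine (integrable_indicator_iff measurableSet_Ioc).2 ?_
      have := (intervalIntegral.intervalIntegrable_rpow'
        (show (-1:ℝ) < -α by linarith) (a := 0) (b := b-a)).const_mul (MF * MG)
      rwa [intervalIntegrable_iff_integrableOn_Ioc_of_le (by linarith)] at this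
  have hint : Integrable (uncurry φ) ((volume : Measure ℝ).prod volume) := by
    refine hbnd_int.mono' hmeas (Filter.Eventually.of_forall fun q => ?_)
    rw [huncurry]
    by_cases hq : q ∈ T
    · rw [Set.indicator_of_mem hq]
      simp only [hbnddef]
      obtain ⟨m1, m2, m3, m4⟩ := hTsub q hq
      have hq' := hq
      rw [hTdef, Set.mem_setOf_eq] at hq'
      rw [Set.indicator_of_mem (mem_Ioc.2 ⟨hq'.1, hq'.2.1⟩),
          Set.indicator_of_mem (mem_Ioc.2 ⟨m3, m4⟩), one_mul, hhdef]
      have hrp : (0:ℝ) ≤ q.2 ^ (-α) := Real.rpow_nonneg m3.le _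
      rw [Real.norm_eq_abs, abs_mul, abs_mul, abs_of_nonneg hrp]
      have := hFb _ m1; have := hGb _ m2
      have h1 : |F (q.1 - q.2)| * |G q.1| ≤ MF * MG := by
        apply mul_le_mul (hFb _ m1) (hGb _ m2) (abs_nonneg _) hMF0
      exact mul_le_mul_of_nonneg_right h1 hrp
    · rw [Set.indicator_of_notMem hq, norm_zero]
      simp only [hbnddef]
      apply mul_nonneg <;> apply Set.indicator_nonneg <;> intro x hx
      · norm_num
      · have : (0:ℝ) ≤ x ^ (-α) := Real.rpow_nonneg hx.1.le _
        positivity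
  -- inner value computations
  have hinner_t : ∀ t ∈ Ioc a b,
      (∫ u, φ t u) = (∫ u in (0:ℝ)..(t-a), F (t-u) * u ^ (-α)) * G t := by
    intro t ht
    have hφt : (fun u => φ t u)
        = (Ioc 0 (t-a)).indicator (fun u => F (t-u) * G t * u ^ (-α)) := by
      funext u
      by_cases hu : u ∈ Ioc 0 (t-a)
      · simp only [hφdef]
        have : (t, u) ∈ T := ⟨ht.1, ht.2, hu.1, hu.2⟩
        rw [Set.indicator_of_mem this, Set.indicator_of_mem hu]
      · simp only [hφdef]
        have : (t, u) ∉ T := fun hmem => hu ⟨hmem.2.2.1, hmem.2.2.2⟩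
        rw [Set.indicator_of_notMem this, Set.indicator_of_notMem hu]
    rw [hφt, MeasureTheory.integral_indicator measurableSet_Ioc,
      ← intervalIntegral.integral_of_le (by linarith [ht.1] : (0:ℝ) ≤ t - a),
      ← intervalIntegral.integral_mul_const]
    apply intervalIntegral.integral_congr
    intro u _
    ring
  have hinner_u : ∀ u ∈ Ioc (0:ℝ) (b-a),
      (∫ t, φ t u) = (∫ s in a..(b-u), F s * G (s+u)) * u ^ (-α) := by
    intro u hu
    have hφu : (fun t => φ t u)
        = (Icc (a+u) b).indicator (fun t => F (t-u) * G t * u ^ (-α)) := by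
      funext t
      by_cases htm : t ∈ Icc (a+u) b
      · simp only [hφdef]
        have : (t, u) ∈ T := ⟨by linarith [htm.1, hu.1], htm.2, hu.1, by linarith [htm.1]⟩
        rw [Set.indicator_of_mem this, Set.indicator_of_mem htm]
      · simp only [hφdef]
        have : (t, u) ∉ T := by
          intro hmem
          exact htm ⟨by linarith [hmem.2.2.2], hmem.2.1⟩
        rw [Set.indicator_of_notMem this, Set.indicator_of_notMem htm]
    have hle : a + u ≤ b := by linarith [hu.2]
    rw [hφu, MeasureTheory.integral_indicator measurableSet_Icc,
      MeasureTheory.integral_Icc_eq_integral_Ioc,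
      ← intervalIntegral.integral_of_le hle]
    have hsub := intervalIntegral.integral_comp_add_right (a := a) (b := b - u)
      (fun t => F (t-u) * G t * u ^ (-α)) u
    simp only [add_sub_cancel_right, sub_add_cancel] at hsub
    rw [← hsub, ← intervalIntegral.integral_mul_const]
  have hzero_t : ∀ t, t ∉ Ioc a b → (∫ u, φ t u) = 0 := by
    intro t ht
    have : (fun u => φ t u) = fun _ => (0:ℝ) := by
      funext u
      simp only [hφdef]
      exact Set.indicator_of_notMem (fun hmem => ht ⟨hmem.1, hmem.2.1⟩) _
    rw [this, integral_zero]
  have hzero_u : ∀ u, u ∉ Ioc (0:ℝ) (b-a) → (∫ t, φ t u) = 0 := by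
    intro u hu
    have : (fun t => φ t u) = fun _ => (0:ℝ) := by
      funext t
      simp only [hφdef]
      refine Set.indicator_of_notMem (fun hmem => hu ⟨hmem.2.2.1, by
        linarith [hmem.2.2.2, hmem.2.1]⟩) _
    rw [this, integral_zero]
  have hswap := MeasureTheory.integral_integral_swap hint
  constructor
  · rw [intervalIntegral.integral_of_le hab.le,
        intervalIntegral.integral_of_le (by linarith : (0:ℝ) ≤ b - a)]
    calc ∫ t in Ioc a b, (∫ u in (0:ℝ)..(t-a), F (t-u) * u ^ (-α)) * G t
        = ∫ t in Ioc a b, ∫ u, φ t u := by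
          exact MeasureTheory.setIntegral_congr_fun measurableSet_Ioc
            (fun t ht => (hinner_t t ht).symm)
      _ = ∫ t, ∫ u, φ t u :=
          MeasureTheory.setIntegral_eq_integral_of_forall_compl_eq_zero hzero_t
      _ = ∫ u, ∫ t, φ t u := hswap
      _ = ∫ u in Ioc (0:ℝ) (b-a), ∫ t, φ t u :=
          (MeasureTheory.setIntegral_eq_integral_of_forall_compl_eq_zero hzero_u).symm
      _ = ∫ u in Ioc (0:ℝ) (b-a), (∫ s in a..(b-u), F s * G (s+u)) * u ^ (-α) :=
          MeasureTheory.setIntegral_congr_fun measurableSet_Ioc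
            (fun u hu => hinner_u u hu)
  · rw [intervalIntegrable_iff_integrableOn_Ioc_of_le (by linarith : (0:ℝ) ≤ b - a)]
    have hI : Integrable (fun u => ∫ t, φ t u) volume := by
      have := hint.integral_prod_right
      exact this
    exact (hI.integrableOn).congr_fun (fun u hu => hinner_u u hu) measurableSet_Ioc

lemma fubiniR (a b α : ℝ) (hab : a < b) (hα : 0 < α) (hα1 : α < 1)
    (F G : ℝ → ℝ) (hF : ContinuousOn F (Icc a b)) (hG : ContinuousOn G (Icc a b)) :
    (∫ s in a..b, F s * (∫ u in (0:ℝ)..(b-s), G (s+u) * u ^ (-α)))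
      = (∫ u in (0:ℝ)..(b-a), (∫ s in a..(b-u), F s * G (s+u)) * u ^ (-α))
    ∧ IntervalIntegrable (fun u => (∫ s in a..(b-u), F s * G (s+u)) * u ^ (-α))
        volume (0:ℝ) (b-a) := by
  have hmaps : ∀ v ∈ Icc a b, a + b - v ∈ Icc a b := fun v hv =>
    mem_Icc.2 ⟨by linarith [hv.2], by linarith [hv.1]⟩
  have hF' : ContinuousOn (fun v => F (a+b-v)) (Icc a b) :=
    ContinuousOn.comp (g := F) hF ((continuous_const.sub continuous_id).continuousOn) hmaps
  have hG' : ContinuousOn (fun v => G (a+b-v)) (Icc a b) :=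
    ContinuousOn.comp (g := G) hG ((continuous_const.sub continuous_id).continuousOn) hmaps
  have key := fubiniL a b α hab hα hα1 _ _ hG' hF'
  have hinner : ∀ u : ℝ,
      (∫ s in a..(b-u), (fun v => G (a+b-v)) s * (fun v => F (a+b-v)) (s+u))
        = ∫ s in a..(b-u), F s * G (s+u) := by
    intro u
    have h2 := intervalIntegral.integral_comp_sub_left (a := a) (b := b-u)
      (fun σ => F σ * G (σ+u)) (a+b-u)
    rw [show a+b-u-(b-u) = a by ring, show a+b-u-a = b-u by ring] at h2
    rw [← h2]
    apply intervalIntegral.integral_congr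
    intro s _
    simp only []
    rw [mul_comm]
    congr 1
    · congr 1; ring
    · congr 1; ring
  have hL : (∫ s in a..b, F s * (∫ u in (0:ℝ)..(b-s), G (s+u) * u ^ (-α)))
      = ∫ t in a..b, (∫ u in (0:ℝ)..(t-a), (fun v => G (a+b-v)) (t-u) * u ^ (-α))
          * (fun v => F (a+b-v)) t := by
    have h1 := intervalIntegral.integral_comp_sub_left (a := a) (b := b)
      (fun s => F s * (∫ u in (0:ℝ)..(b-s), G (s+u) * u ^ (-α))) (a+b)
    rw [show a+b-b = a by ring, show a+b-a = b by ring] at h1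
    rw [← h1]
    apply intervalIntegral.integral_congr
    intro t _
    simp only []
    rw [mul_comm]
    congr 1
    · rw [show b - (a+b-t) = t - a by ring]
      apply intervalIntegral.integral_congr
      intro u _
      congr 2
      ring
  constructor
  · rw [hL, key.1]
    apply intervalIntegral.integral_congr
    intro u _
    simp only []
    congr 1
    exact hinner u
  · have h3 := key.2
    have heqfun : (fun u : ℝ => (∫ s in a..(b-u), G (a+b-s) * F (a+b-(s+u))) * u ^ (-α))
        = fun u => (∫ s in a..(b-u), F s * G (s+u)) * u ^ (-α) :=
      funext fun u => by congr 1; exact hinner u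
    rwa [heqfun] at h3

lemma core (a b α : ℝ) (hab : a < b) (hα : 0 < α) (hα1 : α < 1)
    (f g : ℝ → ℝ) (hf : ContDiffOn ℝ 1 f (Icc a b)) (hg : ContDiffOn ℝ 1 g (Icc a b))
    (hexL : ∀ s ∈ Ioo a b, DifferentiableAt ℝ (leftKer a α f) s)
    (hexR : ∀ s ∈ Ioo a b, DifferentiableAt ℝ (rightKer b α g) s)
    (hiL : IntervalIntegrable (leftRLD a α f) volume a b)
    (hiR : IntervalIntegrable (rightRLD b α g) volume a b) :
    (∫ t in a..b, leftRLD a α f t * g t) = ∫ t in a..b, f t * rightRLD b α g t := by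
  have hΓ : 0 < Real.Gamma (1-α) := Real.Gamma_pos_of_pos (by linarith)
  set c : ℝ := 1 / Real.Gamma (1-α) with hc
  have huD : UniqueDiffOn ℝ (Icc a b) := uniqueDiffOn_Icc hab
  have huIcc : Set.uIcc a b = Icc a b := Set.uIcc_of_le hab.le
  set f' : ℝ → ℝ := derivWithin f (Icc a b) with hf'
  set g' : ℝ → ℝ := derivWithin g (Icc a b) with hg'
  have hf'c : ContinuousOn f' (Icc a b) := hf.continuousOn_derivWithin huD le_rfl
  have hg'c : ContinuousOn g' (Icc a b) := hg.continuousOn_derivWithin huD le_rfl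
  have hfc : ContinuousOn f (Icc a b) := hf.continuousOn
  have hgc : ContinuousOn g (Icc a b) := hg.continuousOn
  have hfd : ∀ x ∈ Ioo a b, HasDerivAt f (f' x) x := by
    intro x hx
    exact ((hf.differentiableOn one_ne_zero x
      (Ioo_subset_Icc_self hx)).hasDerivWithinAt).hasDerivAt (Icc_mem_nhds hx.1 hx.2)
  have hgd : ∀ x ∈ Ioo a b, HasDerivAt g (g' x) x := by
    intro x hx
    exact ((hg.differentiableOn one_ne_zero x
      (Ioo_subset_Icc_self hx)).hasDerivWithinAt).hasDerivAt (Icc_mem_nhds hx.1 hx.2)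
  have hKf := contOn_leftKer a b α hab hα hα1 f hfc
  have hKg := contOn_rightKer a b α hab hα hα1 g hgc
  -- integrabilities
  have hint1 : IntervalIntegrable (fun t => leftRLD a α f t * g t) volume a b :=
    hiL.mul_continuousOn (huIcc ▸ hgc)
  have hint2 : IntervalIntegrable (fun t => leftKer a α f t * g' t) volume a b := by
    apply ContinuousOn.intervalIntegrable
    rw [huIcc]; exact hKf.mul hg'c
  have hint3 : IntervalIntegrable (fun t => f t * rightRLD b α g t) volume a b :=
    hiR.continuousOn_mul (huIcc ▸ hfc)
  have hint4 : IntervalIntegrable (fun t => f' t * rightKer b α g t) volume a b := by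
    apply ContinuousOn.intervalIntegrable
    rw [huIcc]; exact hf'c.mul hKg
  -- IBP left
  have e1 : (∫ t in a..b, leftRLD a α f t * g t) + (∫ t in a..b, leftKer a α f t * g' t)
      = leftKer a α f b * g b := by
    have e := intervalIntegral.integral_eq_sub_of_hasDeriv_right_of_le
      (f := fun t => leftKer a α f t * g t)
      (f' := fun t => leftRLD a α f t * g t + leftKer a α f t * g' t) hab.le
      (hKf.mul hgc)
      (fun x hx => (((hexL x hx).hasDerivAt).mul (hgd x hx)).hasDerivWithinAt)
      (hint1.add hint2)
    rw [intervalIntegral.integral_add hint1 hint2] at e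
    simp only [leftKer_a, zero_mul, sub_zero] at e
    exact e
  -- IBP right
  have hKgd : ∀ x ∈ Ioo a b, HasDerivAt (rightKer b α g) (-(rightRLD b α g x)) x := by
    intro x hx
    have := (hexR x hx).hasDerivAt
    simpa [rightRLD, neg_neg] using this
  have e2 : (∫ t in a..b, f' t * rightKer b α g t) - (∫ t in a..b, f t * rightRLD b α g t)
      = -(f a * rightKer b α g a) := by
    have e := intervalIntegral.integral_eq_sub_of_hasDeriv_right_of_le
      (f := fun t => f t * rightKer b α g t)
      (f' := fun t => f' t * rightKer b α g t - f t * rightRLD b α g t) hab.le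
      (hfc.mul hKg)
      (fun x hx => by
        have h2 := (hfd x hx).mul (hKgd x hx)
        have h2' : HasDerivAt (fun y => f y * rightKer b α g y)
            (f' x * rightKer b α g x - f x * rightRLD b α g x) x := by
          exact h2.congr_deriv (by ring)
        exact h2'.hasDerivWithinAt)
      (hint4.sub hint3)
    rw [intervalIntegral.integral_sub hint4 hint3] at e
    simp only [rightKer_b, mul_zero, zero_sub] at e
    exact e
  -- Fubini core
  have hkey : (∫ t in a..b, leftKer a α f t * g' t) + (∫ t in a..b, f' t * rightKer b α g t)
      = leftKer a α f b * g b - f a * rightKer b α g a := by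
    have hXfor : (∫ t in a..b, leftKer a α f t * g' t)
        = c * ∫ t in a..b, (∫ u in (0:ℝ)..(t-a), f (t-u) * u ^ (-α)) * g' t := by
      rw [← intervalIntegral.integral_const_mul]
      apply intervalIntegral.integral_congr
      intro t _
      simp only [leftKer, ← hc, substL a α f t]
      ring
    have hYfor : (∫ t in a..b, f' t * rightKer b α g t)
        = c * ∫ s in a..b, f' s * (∫ u in (0:ℝ)..(b-s), g (s+u) * u ^ (-α)) := by
      rw [← intervalIntegral.integral_const_mul]
      apply intervalIntegral.integral_congr
      intro s _
      simp only [rightKer, ← hc, substR b α g s]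
      ring
    obtain ⟨hXeq, hXint⟩ := fubiniL a b α hab hα hα1 f g' hfc hg'c
    obtain ⟨hYeq, hYint⟩ := fubiniR a b α hab hα hα1 f' g hf'c hgc
    have hZ : ∀ u ∈ Set.uIcc (0:ℝ) (b-a),
        ((∫ s in a..(b-u), f s * g' (s+u)) * u ^ (-α)
          + (∫ s in a..(b-u), f' s * g (s+u)) * u ^ (-α))
        = ((f (b-u) * g b) * u ^ (-α) - (f a * g (a+u)) * u ^ (-α)) := by
      intro u hu
      rw [Set.uIcc_of_le (by linarith)] at hu
      have h0u : (0:ℝ) ≤ u := hu.1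
      have hub : a ≤ b - u := by linarith [hu.2]
      have hIccsub : Icc a (b-u) ⊆ Icc a b := Icc_subset_Icc le_rfl (by linarith)
      have hgcomp : ContinuousOn (fun s => g (s+u)) (Icc a (b-u)) := by
        refine ContinuousOn.comp (g := g) hgc
          ((continuous_id.add continuous_const).continuousOn) ?_
        intro s hs
        simp only []
        exact mem_Icc.2 ⟨by linarith [hs.1], by linarith [hs.2]⟩
      have hg'comp : ContinuousOn (fun s => g' (s+u)) (Icc a (b-u)) := by
        refine ContinuousOn.comp (g := g') hg'c
          ((continuous_id.add continuous_const).continuousOn) ?_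
        intro s hs
        simp only []
        exact mem_Icc.2 ⟨by linarith [hs.1], by linarith [hs.2]⟩
      have hFTC : (∫ s in a..(b-u), (f' s * g (s+u) + f s * g' (s+u)))
          = f (b-u) * g b - f a * g (a+u) := by
        have e := intervalIntegral.integral_eq_sub_of_hasDeriv_right_of_le
          (f := fun s => f s * g (s+u))
          (f' := fun s => f' s * g (s+u) + f s * g' (s+u)) hub
          ((hfc.mono hIccsub).mul hgcomp)
          (fun x hx => by
            have hx' : x ∈ Ioo a b := ⟨hx.1, by linarith [hx.2]⟩
            have hxu : x + u ∈ Ioo a b := ⟨by linarith [hx.1], by linarith [hx.2]⟩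
            have hgx : HasDerivAt (fun s => g (s+u)) (g' (x+u)) x := by
              have := (hgd (x+u) hxu).comp x ((hasDerivAt_id x).add_const u)
              rw [mul_one] at this; exact this
            exact ((hfd x hx').mul hgx).hasDerivWithinAt)
          (by
            apply ContinuousOn.intervalIntegrable
            rw [Set.uIcc_of_le hub]
            exact ((hf'c.mono hIccsub).mul hgcomp).add ((hfc.mono hIccsub).mul hg'comp))
        beta_reduce at e
        rw [show b - u + u = b by ring] at e
        exact e
      have hisub : IntervalIntegrable (fun s => f s * g' (s+u)) volume a (b-u) := by
        apply ContinuousOn.intervalIntegrable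
        rw [Set.uIcc_of_le hub]
        exact (hfc.mono hIccsub).mul hg'comp
      have hisub2 : IntervalIntegrable (fun s => f' s * g (s+u)) volume a (b-u) := by
        apply ContinuousOn.intervalIntegrable
        rw [Set.uIcc_of_le hub]
        exact (hf'c.mono hIccsub).mul hgcomp
      rw [← add_mul, ← intervalIntegral.integral_add hisub hisub2]
      have : (∫ s in a..(b-u), (f s * g' (s+u) + f' s * g (s+u)))
          = f (b-u) * g b - f a * g (a+u) := by
        rw [← hFTC]
        apply intervalIntegral.integral_congr
        intro s _
        ring
      rw [this]
      ring
    have hZ1int : IntervalIntegrable (fun u => (f (b-u) * g b) * u ^ (-α)) volume 0 (b-a) := by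
      apply IntervalIntegrable.continuousOn_mul
        (intervalIntegral.intervalIntegrable_rpow' (by linarith))
      rw [Set.uIcc_of_le (by linarith : (0:ℝ) ≤ b - a)]
      apply ContinuousOn.mul _ continuousOn_const
      refine ContinuousOn.comp (g := f) hfc
        ((continuous_const.sub continuous_id).continuousOn) ?_
      intro u hu
      exact mem_Icc.2 ⟨by linarith [hu.2], by linarith [hu.1]⟩
    have hZ2int : IntervalIntegrable (fun u => (f a * g (a+u)) * u ^ (-α)) volume 0 (b-a) := by
      apply IntervalIntegrable.continuousOn_mul
        (intervalIntegral.intervalIntegrable_rpow' (by linarith))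
      rw [Set.uIcc_of_le (by linarith : (0:ℝ) ≤ b - a)]
      apply ContinuousOn.mul continuousOn_const
      refine ContinuousOn.comp (g := g) hgc
        ((continuous_const.add continuous_id).continuousOn) ?_
      intro u hu
      exact mem_Icc.2 ⟨by linarith [hu.1], by linarith [hu.2]⟩
    rw [hXfor, hYfor, hXeq, hYeq, ← mul_add, ← intervalIntegral.integral_add hXint hYint,
      intervalIntegral.integral_congr hZ,
      intervalIntegral.integral_sub hZ1int hZ2int]
    have hE1 : (∫ u in (0:ℝ)..(b-a), (f (b-u) * g b) * u ^ (-α))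
        = g b * ∫ u in (0:ℝ)..(b-a), f (b-u) * u ^ (-α) := by
      rw [← intervalIntegral.integral_const_mul]
      apply intervalIntegral.integral_congr
      intro u _
      ring
    have hE2 : (∫ u in (0:ℝ)..(b-a), (f a * g (a+u)) * u ^ (-α))
        = f a * ∫ u in (0:ℝ)..(b-a), g (a+u) * u ^ (-α) := by
      rw [← intervalIntegral.integral_const_mul]
      apply intervalIntegral.integral_congr
      intro u _
      ring
    rw [hE1, hE2, ← substL a α f b, ← substR b α g a]
    simp only [leftKer, rightKer, ← hc]
    ring
  linarith [e1, e2, hkey]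


/-- The Cresson–Darses fractional derivative operator of order `(α,β)`:
`D_γ^{α,β} = ½(D_{a+}^α − D_{b-}^β) + (iγ/2)(D_{a+}^α + D_{b-}^β)`. -/
noncomputable def cressonDarses (a b α β : ℝ) (γ : ℂ) (f : ℝ → ℝ) (t : ℝ) : ℂ :=
  (1 / 2 : ℂ) * ((leftRLD a α f t : ℂ) - (rightRLD b β f t : ℂ))
    + Complex.I * γ / 2 * ((leftRLD a α f t : ℂ) + (rightRLD b β f t : ℂ))

/-- Lemma 1 (Cresson–Darses integration by parts):
`∫_a^b (D_γ^{α,β} f)(t) g(t) dt = − ∫_a^b f(t) (D_{−γ}^{β,α} g)(t) dt`. -/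
theorem cressonDarses_integration_by_parts (a b α β : ℝ) (hab : a < b)
    (hα : 0 < α) (hα1 : α < 1) (hβ : 0 < β) (hβ1 : β < 1) (γ : ℂ)
    (f g : ℝ → ℝ)
    (hf : ContDiffOn ℝ 1 f (Icc a b)) (hg : ContDiffOn ℝ 1 g (Icc a b))
    (hbd : (f a = 0 ∧ f b = 0) ∨ (g a = 0 ∧ g b = 0))
    (hexLf : ∀ s ∈ Ioo a b, DifferentiableAt ℝ (leftKer a α f) s)
    (hexRf : ∀ s ∈ Ioo a b, DifferentiableAt ℝ (rightKer b β f) s)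
    (hexLg : ∀ s ∈ Ioo a b, DifferentiableAt ℝ (leftKer a β g) s)
    (hexRg : ∀ s ∈ Ioo a b, DifferentiableAt ℝ (rightKer b α g) s)
    (hiLf : IntervalIntegrable (leftRLD a α f) volume a b)
    (hiRf : IntervalIntegrable (rightRLD b β f) volume a b)
    (hiLg : IntervalIntegrable (leftRLD a β g) volume a b)
    (hiRg : IntervalIntegrable (rightRLD b α g) volume a b) :
    ∫ s in a..b, cressonDarses a b α β γ f s * (g s : ℂ)
      = - ∫ s in a..b, (f s : ℂ) * cressonDarses a b β α (-γ) g s := by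
  have I1 := core a b α hab hα hα1 f g hf hg hexLf hexRg hiLf hiRg
  have I2 := core a b β hab hβ hβ1 g f hg hf hexLg hexRf hiLg hiRf
  have huIcc : Set.uIcc a b = Icc a b := Set.uIcc_of_le hab.le
  have hgc : ContinuousOn g (Set.uIcc a b) := huIcc ▸ hg.continuousOn
  have hfc : ContinuousOn f (Set.uIcc a b) := huIcc ▸ hf.continuousOn
  have hP1 : IntervalIntegrable (fun t => leftRLD a α f t * g t) volume a b :=
    hiLf.mul_continuousOn hgc
  have hP2 : IntervalIntegrable (fun t => rightRLD b β f t * g t) volume a b :=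
    hiRf.mul_continuousOn hgc
  have hQ1 : IntervalIntegrable (fun t => f t * leftRLD a β g t) volume a b :=
    hiLg.continuousOn_mul hfc
  have hQ2 : IntervalIntegrable (fun t => f t * rightRLD b α g t) volume a b :=
    hiRg.continuousOn_mul hfc
  have coeInt : ∀ {h : ℝ → ℝ}, IntervalIntegrable h volume a b →
      IntervalIntegrable (fun s => ((h s : ℝ) : ℂ)) volume a b :=
    fun h => ⟨h.1.ofReal, h.2.ofReal⟩
  have hcomm1 : (∫ t in a..b, rightRLD b β f t * g t) = ∫ t in a..b, g t * rightRLD b β f t :=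
    intervalIntegral.integral_congr fun t _ => mul_comm _ _
  have hcomm2 : (∫ t in a..b, f t * leftRLD a β g t) = ∫ t in a..b, leftRLD a β g t * f t :=
    intervalIntegral.integral_congr fun t _ => mul_comm _ _
  have hQ1P2 : (∫ t in a..b, f t * leftRLD a β g t) = ∫ t in a..b, rightRLD b β f t * g t := by
    rw [hcomm2, I2, hcomm1]
  have hL : (∫ s in a..b, cressonDarses a b α β γ f s * (g s : ℂ))
      = ((1:ℂ)/2 + Complex.I * γ / 2) * ((∫ t in a..b, leftRLD a α f t * g t : ℝ) : ℂ)
        + (-(1:ℂ)/2 + Complex.I * γ / 2) * ((∫ t in a..b, rightRLD b β f t * g t : ℝ) : ℂ) := by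
    have hfun : (fun s => cressonDarses a b α β γ f s * (g s : ℂ))
        = fun s => ((1:ℂ)/2 + Complex.I * γ / 2) * ((leftRLD a α f s * g s : ℝ) : ℂ)
          + (-(1:ℂ)/2 + Complex.I * γ / 2) * ((rightRLD b β f s * g s : ℝ) : ℂ) :=
      funext fun s => by unfold cressonDarses; push_cast; ring
    rw [hfun, intervalIntegral.integral_add ((coeInt hP1).const_mul _)
        ((coeInt hP2).const_mul _),
      intervalIntegral.integral_const_mul, intervalIntegral.integral_const_mul,
      intervalIntegral.integral_ofReal, intervalIntegral.integral_ofReal]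
  have hR : (∫ s in a..b, (f s : ℂ) * cressonDarses a b β α (-γ) g s)
      = ((1:ℂ)/2 - Complex.I * γ / 2) * ((∫ t in a..b, f t * leftRLD a β g t : ℝ) : ℂ)
        + (-(1:ℂ)/2 - Complex.I * γ / 2) * ((∫ t in a..b, f t * rightRLD b α g t : ℝ) : ℂ) := by
    have hfun : (fun s => (f s : ℂ) * cressonDarses a b β α (-γ) g s)
        = fun s => ((1:ℂ)/2 - Complex.I * γ / 2) * ((f s * leftRLD a β g s : ℝ) : ℂ)
          + (-(1:ℂ)/2 - Complex.I * γ / 2) * ((f s * rightRLD b α g s : ℝ) : ℂ) :=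
      funext fun s => by unfold cressonDarses; push_cast; ring
    rw [hfun, intervalIntegral.integral_add ((coeInt hQ1).const_mul _)
        ((coeInt hQ2).const_mul _),
      intervalIntegral.integral_const_mul, intervalIntegral.integral_const_mul,
      intervalIntegral.integral_ofReal, intervalIntegral.integral_ofReal]
  rw [hL, hR, hQ1P2, ← I1]
  ring
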